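/- Let N and K be positive integers, let w_1, …, w_K and h̃ be vectors in ℂ^N, let γ ≥ 0, σ² ≥ 0, δ ≥ 0, fix k ∈ {1, …, K}, set ε = δ² + 2δ‖h̃‖ and M = w_k w_k† − γ·Σ_{i≠k} w_i w_i†. If Re Tr((h̃h̃†)M) − ε‖M‖_F ≥ σ²γ, then for every h ∈ ℂ^N with ‖h − h̃‖ ≤ δ one has |w_k†h|² ≥ γ·(σ² + Σ_{i≠k} |w_i†h|²); that is, the exact worst-case (ExCS) constraint guarantees the SINR constraint for every channel realization in the uncertainty ball. -/

import Mathlib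

open Matrix BigOperators Finset

/-- The Frobenius norm of a complex `N × N` matrix. -/
noncomputable def frob {N : ℕ} (A : Matrix (Fin N) (Fin N) ℂ) : ℝ :=
  Real.sqrt (∑ i, ∑ j, ‖A i j‖ ^ 2)

/-- The real part of the trace of a complex matrix. -/
noncomputable def reTr {N : ℕ} (A : Matrix (Fin N) (Fin N) ℂ) : ℝ :=
  (Matrix.trace A).re

/-- The Euclidean norm of a complex vector. -/
noncomputable def vnorm {N : ℕ} (v : Fin N → ℂ) : ℝ :=
  Real.sqrt (∑ i, ‖v i‖ ^ 2)

/-- The standard inner product `u† v` of two complex vectors. -/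
noncomputable def dotc {N : ℕ} (u v : Fin N → ℂ) : ℂ :=
  ∑ i, star (u i) * v i

/-- The outer product `u v†` of two complex vectors. -/
def outer {N : ℕ} (u v : Fin N → ℂ) : Matrix (Fin N) (Fin N) ℂ :=
  fun i j => u i * star (v j)

/-! Write `h = h̃ + e` with `‖e‖ ≤ δ`. The quadratic form `h† M h` differs from
`h̃† M h̃ = Tr(h̃ h̃† M)` by the cross terms `h̃† M e + e† M h̃ + e† M e`; Cauchy–Schwarz together
with `‖M v‖ ≤ ‖M‖_F ‖v‖` bounds them by `(δ² + 2δ‖h̃‖) ‖M‖_F = ε ‖M‖_F`. Since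
`Re h† M h = |w_k† h|² - γ Σ_{i≠k} |w_i† h|²`, the ExCS constraint gives the SINR constraint. -/

section

variable {N : ℕ}

lemma vnorm_nonneg (v : Fin N → ℂ) : 0 ≤ vnorm v := Real.sqrt_nonneg _

lemma frob_nonneg (A : Matrix (Fin N) (Fin N) ℂ) : 0 ≤ frob A := Real.sqrt_nonneg _

lemma vnorm_eq_norm_toLp (v : Fin N → ℂ) : vnorm v = ‖WithLp.toLp 2 v‖ := by
  simp [vnorm, EuclideanSpace.norm_eq]

lemma outer_eq_vecMulVec (u v : Fin N → ℂ) : outer u v = vecMulVec u (star v) := rfl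

lemma dotc_eq_star_dotProduct (u v : Fin N → ℂ) : dotc u v = star u ⬝ᵥ v := rfl

lemma dotc_eq_inner_toLp (u v : Fin N → ℂ) :
    dotc u v = inner ℂ (WithLp.toLp 2 u) (WithLp.toLp 2 v) := by
  rw [EuclideanSpace.inner_toLp_toLp, dotProduct_comm, dotc_eq_star_dotProduct]

lemma norm_dotc_le (u v : Fin N → ℂ) : ‖dotc u v‖ ≤ vnorm u * vnorm v := by
  rw [dotc_eq_inner_toLp, vnorm_eq_norm_toLp, vnorm_eq_norm_toLp]
  exact norm_inner_le_norm _ _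

attribute [local instance] Matrix.frobeniusNormedAddCommGroup in
lemma frob_eq_norm (A : Matrix (Fin N) (Fin N) ℂ) : frob A = ‖A‖ := by
  simp [frob, Matrix.frobenius_norm_def, Real.sqrt_eq_rpow]

attribute [local instance] Matrix.frobeniusNormedAddCommGroup in
lemma vnorm_mulVec_le (A : Matrix (Fin N) (Fin N) ℂ) (v : Fin N → ℂ) :
    vnorm (A *ᵥ v) ≤ frob A * vnorm v := by
  rw [vnorm_eq_norm_toLp, vnorm_eq_norm_toLp, frob_eq_norm,
    ← frobenius_norm_replicateCol (ι := Unit), ← frobenius_norm_replicateCol (ι := Unit),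
    replicateCol_mulVec]
  exact frobenius_norm_mul _ _

lemma norm_dotc_mulVec_le (u v : Fin N → ℂ) (A : Matrix (Fin N) (Fin N) ℂ) :
    ‖dotc u (A *ᵥ v)‖ ≤ vnorm u * frob A * vnorm v := by
  rw [mul_assoc]
  exact (norm_dotc_le u _).trans (mul_le_mul_of_nonneg_left (vnorm_mulVec_le A v) (vnorm_nonneg u))

lemma dotc_add_mulVec_add (A : Matrix (Fin N) (Fin N) ℂ) (x e : Fin N → ℂ) :
    dotc (x + e) (A *ᵥ (x + e)) =
      dotc x (A *ᵥ x) + (dotc x (A *ᵥ e) + dotc e (A *ᵥ x) + dotc e (A *ᵥ e)) := by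
  simp only [dotc_eq_star_dotProduct, star_add, mulVec_add, add_dotProduct, dotProduct_add]
  ring

lemma sub_le_re_dotc_mulVec_add (A : Matrix (Fin N) (Fin N) ℂ) (x e : Fin N → ℂ) {δ : ℝ}
    (he : vnorm e ≤ δ) :
    (dotc x (A *ᵥ x)).re - (δ ^ 2 + 2 * δ * vnorm x) * frob A ≤
      (dotc (x + e) (A *ᵥ (x + e))).re := by
  set r := dotc x (A *ᵥ e) + dotc e (A *ᵥ x) + dotc e (A *ᵥ e)
  have hx := vnorm_nonneg x
  have hA := frob_nonneg A
  have hδ : 0 ≤ δ := (vnorm_nonneg e).trans he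
  have hr : ‖r‖ ≤ (δ ^ 2 + 2 * δ * vnorm x) * frob A := by
    have hxe : vnorm x * frob A * vnorm e ≤ vnorm x * frob A * δ :=
      mul_le_mul_of_nonneg_left he (mul_nonneg hx hA)
    have hex : vnorm e * frob A * vnorm x ≤ δ * frob A * vnorm x :=
      mul_le_mul_of_nonneg_right (mul_le_mul_of_nonneg_right he hA) hx
    have hee : vnorm e * frob A * vnorm e ≤ δ * frob A * δ :=
      mul_le_mul (mul_le_mul_of_nonneg_right he hA) he (vnorm_nonneg e) (mul_nonneg hδ hA)
    linarith [norm_add₃_le (a := dotc x (A *ᵥ e)) (b := dotc e (A *ᵥ x)) (c := dotc e (A *ᵥ e)),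
      norm_dotc_mulVec_le x e A, norm_dotc_mulVec_le e x A, norm_dotc_mulVec_le e e A]
  rw [dotc_add_mulVec_add, Complex.add_re]
  linarith [(abs_le.1 (Complex.abs_re_le_norm r)).1]

lemma trace_outer_mul (a b : Fin N → ℂ) (A : Matrix (Fin N) (Fin N) ℂ) :
    trace (outer a b * A) = dotc b (A *ᵥ a) := by
  rw [outer_eq_vecMulVec, vecMulVec_mul, trace_vecMulVec,
    dotc_eq_star_dotProduct, dotProduct_mulVec, dotProduct_comm]

lemma re_dotc_outer_self_mulVec (u h : Fin N → ℂ) :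
    (dotc h (outer u u *ᵥ h)).re = ‖dotc u h‖ ^ 2 := by
  have hconj : dotc h u = star (dotc u h) := star_dotProduct h u
  rw [outer_eq_vecMulVec, vecMulVec_mulVec, op_smul_eq_smul,
    ← dotc_eq_star_dotProduct, dotc_eq_star_dotProduct h, dotProduct_smul,
    ← dotc_eq_star_dotProduct, hconj, smul_eq_mul, ← Complex.ofReal_re (_ ^ 2),
    Complex.ofReal_pow]
  exact congrArg Complex.re (Complex.mul_conj' _)

lemma re_dotc_mulVec_outer_sub_smul_sum {ι : Type*} (u : Fin N → ℂ) (w : ι → Fin N → ℂ)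
    (s : Finset ι) (γ : ℝ) (h : Fin N → ℂ) :
    (dotc h ((outer u u - γ • ∑ i ∈ s, outer (w i) (w i)) *ᵥ h)).re =
      ‖dotc u h‖ ^ 2 - γ * ∑ i ∈ s, ‖dotc (w i) h‖ ^ 2 := by
  rw [sub_mulVec, smul_mulVec, sum_mulVec, dotc_eq_star_dotProduct, dotProduct_sub,
    dotProduct_smul, dotProduct_sum]
  simp only [← dotc_eq_star_dotProduct, Complex.sub_re, Complex.smul_re, Complex.re_sum,
    re_dotc_outer_self_mulVec, smul_eq_mul]

end

theorem stmt10_general (N K : ℕ)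
    (w : Fin K → Fin N → ℂ) (h' : Fin N → ℂ)
    (γ : ℝ) (σsq : ℝ) (δ : ℝ)
    (k : Fin K)
    (ε : ℝ) (hε : ε = δ ^ 2 + 2 * δ * vnorm h')
    (M : Matrix (Fin N) (Fin N) ℂ)
    (hM : M = outer (w k) (w k) - γ • ∑ i ∈ Finset.univ.erase k, outer (w i) (w i))
    (hExCS : reTr (outer h' h' * M) - ε * frob M ≥ σsq * γ) :
    ∀ h : Fin N → ℂ, vnorm (h - h') ≤ δ →
      ‖dotc (w k) h‖ ^ 2 ≥
        γ * (σsq + ∑ i ∈ Finset.univ.erase k, ‖dotc (w i) h‖ ^ 2) := by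
  intro h hball
  have hrobust := sub_le_re_dotc_mulVec_add M h' (h - h') hball
  rw [add_sub_cancel, ← hε] at hrobust
  rw [reTr, trace_outer_mul] at hExCS
  have hsinr : (dotc h (M *ᵥ h)).re =
      ‖dotc (w k) h‖ ^ 2 - γ * ∑ i ∈ Finset.univ.erase k, ‖dotc (w i) h‖ ^ 2 := by
    rw [hM, re_dotc_mulVec_outer_sub_smul_sum]
  linarith

theorem stmt10 (N K : ℕ) (hN : 0 < N) (hK : 0 < K)
    (w : Fin K → Fin N → ℂ) (h' : Fin N → ℂ)
    (γ : ℝ) (hγ : 0 ≤ γ) (σsq : ℝ) (hσ : 0 ≤ σsq) (δ : ℝ) (hδ : 0 ≤ δ)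
    (k : Fin K)
    (ε : ℝ) (hε : ε = δ ^ 2 + 2 * δ * vnorm h')
    (M : Matrix (Fin N) (Fin N) ℂ)
    (hM : M = outer (w k) (w k) - γ • ∑ i ∈ Finset.univ.erase k, outer (w i) (w i))
    (hExCS : reTr (outer h' h' * M) - ε * frob M ≥ σsq * γ) :
    ∀ h : Fin N → ℂ, vnorm (h - h') ≤ δ →
      ‖dotc (w k) h‖ ^ 2 ≥
        γ * (σsq + ∑ i ∈ Finset.univ.erase k, ‖dotc (w i) h‖ ^ 2) :=
  stmt10_general N K w h' γ σsq δ k ε hε M hM hExCS
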